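/- Let J₀ be a two-sided p-periodic Jacobi matrix with parameters (a⁰,b⁰) and p ≥ 2, and let J = J(a,b) be a half-line Jacobi operator with bounded parameters. Then for every m ≥ 1: (Δ_{J₀}(J))_{m,m+p} = Π_{j=m}^{m+p−1} (a_j / a⁰_j), and (Δ_{J₀}(J))_{m,m+p−1} = (Π_{j=m}^{m+p−1} a⁰_j)^{−1} · (Π_{j=m}^{m+p−2} a_j) · Σ_{j=0}^{p−1} (b_{m+j} − b⁰_{m+j}). -/

import Mathlib

open scoped ComplexConjugate

noncomputable section

/-- The half-line Hilbert space `ℓ²({1,2,…})`, realized inside `ℓ²(ℕ)` with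
site `0` playing no role. -/
abbrev HN : Type := lp (fun _ : ℕ => ℂ) 2

/-- The standard basis vectors. -/
def deltaN (k : ℕ) : HN := lp.single 2 k 1

/-- Matrix entries `A_{kℓ} = ⟨δ_k, A δ_ℓ⟩`. -/
def entryN (A : HN →L[ℂ] HN) (k l : ℕ) : ℂ := inner ℂ (deltaN k) (A (deltaN l))

/-- `J` acts as the half-line Jacobi operator with parameters `(a,b)` (indexed by
`{1,2,…}`): `(Ju)_1 = b_1 u_1 + a_1 u_2`, and `(Ju)_n = a_{n−1}u_{n−1} + b_n u_n +
a_n u_{n+1}` for `n ≥ 2`; site `0` of the ambient `ℓ²(ℕ)` is annihilated. -/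
def IsHalfJacobi (a b : ℕ → ℝ) (J : HN →L[ℂ] HN) : Prop :=
  ∀ u : HN, (J u) 0 = 0 ∧
    (J u) 1 = (b 1 : ℂ) * u 1 + (a 1 : ℂ) * u 2 ∧
    ∀ n : ℕ, 2 ≤ n →
      (J u) n = (a (n - 1) : ℂ) * u (n - 1) + (b n : ℂ) * u n + (a n : ℂ) * u (n + 1)

/-- The transfer matrix `Λ_n(x) = (1/a_n)·[[x − b_n, −1], [a_n², 0]]`. -/
def lamMat (a b : ℤ → ℝ) (n : ℤ) : Matrix (Fin 2) (Fin 2) (Polynomial ℝ) :=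
  Polynomial.C (a n)⁻¹ • !![Polynomial.X - Polynomial.C (b n), -1;
    Polynomial.C ((a n) ^ 2), 0]

/-- The ordered product `Λ_n ⋯ Λ_2 Λ_1`. -/
def tMat (a b : ℤ → ℝ) : ℕ → Matrix (Fin 2) (Fin 2) (Polynomial ℝ)
  | 0 => 1
  | n + 1 => lamMat a b ((n : ℤ) + 1) * tMat a b n

/-- The discriminant `Δ_{(a,b)}(x) = Tr(Λ_p(x) ⋯ Λ_1(x))`. -/
def disc (a b : ℤ → ℝ) (p : ℕ) : Polynomial ℝ := Matrix.trace (tMat a b p)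

/-- Evaluation of a real polynomial at a bounded operator. -/
def polyOpN (q : Polynomial ℝ) (A : HN →L[ℂ] HN) : HN →L[ℂ] HN :=
  Polynomial.aeval A (q.map (algebraMap ℝ ℂ))

/-!
Only the two top coefficients of `Δ` matter. Since `J` is tridiagonal, `(J^i)_{m,m+l}` vanishes
for `i < l`, equals `a_m ⋯ a_{m+l-1}` for `i = l`, and for `i = l + 1` picks up one diagonal step,
which produces the factor `b_m + ⋯ + b_{m+l}`. On the other side, multiplying out the transfer
matrices shows that `Δ` has leading coefficient `(∏ a⁰)⁻¹` and next coefficient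
`-(∑ b⁰)(∏ a⁰)⁻¹`, the sums and products taken over one period, which by periodicity may be any
window of length `p`.
-/

open Polynomial Finset

@[to_additive]
lemma Function.Periodic.prod_range_add_one {M : Type*} [CommMonoid M] {f : ℤ → M} {p : ℕ}
    (hf : Function.Periodic f p) (x : ℤ) :
    ∏ j ∈ range p, f (x + 1 + j) = ∏ j ∈ range p, f (x + j) := by
  rcases p with _ | p
  · simp
  rw [prod_range_succ, prod_range_succ']
  congr 1
  · exact prod_congr rfl fun j _ => by push_cast; ring_nf
  · rw [add_assoc, add_comm 1, ← Nat.cast_succ, hf, Nat.cast_zero, add_zero]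

@[to_additive]
lemma Function.Periodic.prod_range_add_eq {M : Type*} [CommMonoid M] {f : ℤ → M} {p : ℕ}
    (hf : Function.Periodic f p) (x y : ℤ) :
    ∏ j ∈ range p, f (x + j) = ∏ j ∈ range p, f (y + j) := by
  suffices h : ∀ x, ∏ j ∈ range p, f (x + j) = ∏ j ∈ range p, f (0 + j) by rw [h x, h y]
  intro x
  induction x using Int.induction_on with
  | zero => rfl
  | succ i ih => rw [hf.prod_range_add_one, ih]
  | pred i ih => rw [← ih, ← hf.prod_range_add_one, sub_add_cancel]

lemma deltaN_apply (l n : ℕ) : deltaN l n = if n = l then 1 else 0 := by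
  simp [deltaN, lp.single_apply, Pi.single_apply]

lemma entryN_eq_apply (A : HN →L[ℂ] HN) (k l : ℕ) : entryN A k l = A (deltaN l) k := by
  simp [entryN, deltaN, lp.inner_single_left]

lemma entryN_polyOpN {q : ℝ[X]} {N : ℕ} (hq : q.natDegree < N) (A : HN →L[ℂ] HN) (k l : ℕ) :
    entryN (polyOpN q A) k l = ∑ i ∈ range N, (q.coeff i : ℂ) * (A ^ i) (deltaN l) k := by
  have hq' : (q.map (algebraMap ℝ ℂ)).natDegree < N := (natDegree_map_le).trans_lt hq
  rw [entryN_eq_apply, polyOpN, aeval_eq_sum_range' hq', _root_.sum_apply, lp.coeFn_sum,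
    Finset.sum_apply]
  refine sum_congr rfl fun i _ => ?_
  rw [smul_apply, lp.coeFn_smul, Pi.smul_apply, coeff_map]
  rfl

namespace IsHalfJacobi

variable {a b : ℕ → ℝ} {J : HN →L[ℂ] HN}

lemma apply_of_apply_zero (hJ : IsHalfJacobi a b J) {u : HN} (hu : u 0 = 0) {n : ℕ}
    (hn : 1 ≤ n) :
    J u n = (a (n - 1) : ℂ) * u (n - 1) + (b n : ℂ) * u n + (a n : ℂ) * u (n + 1) := by
  obtain rfl | hn := hn.eq_or_lt
  · simp [(hJ u).2.1, hu]
  · exact (hJ u).2.2 n hn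

lemma pow_deltaN_apply_zero (hJ : IsHalfJacobi a b J) {l : ℕ} (hl : 1 ≤ l) :
    ∀ k, (J ^ k) (deltaN l) 0 = 0
  | 0 => by simp [deltaN_apply, show 0 ≠ l by omega]
  | k + 1 => by rw [pow_succ', mul_apply_eq_comp]; exact (hJ _).1

lemma pow_succ_deltaN_apply (hJ : IsHalfJacobi a b J) {l : ℕ} (hl : 1 ≤ l) (k : ℕ) {n : ℕ}
    (hn : 1 ≤ n) :
    (J ^ (k + 1)) (deltaN l) n = (a (n - 1) : ℂ) * (J ^ k) (deltaN l) (n - 1) +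
      (b n : ℂ) * (J ^ k) (deltaN l) n + (a n : ℂ) * (J ^ k) (deltaN l) (n + 1) := by
  rw [pow_succ', mul_apply_eq_comp]
  exact hJ.apply_of_apply_zero (hJ.pow_deltaN_apply_zero hl k) hn

lemma pow_deltaN_apply_of_lt (hJ : IsHalfJacobi a b J) {l : ℕ} (hl : 1 ≤ l) (k n : ℕ)
    (hn : n + k < l) : (J ^ k) (deltaN l) n = 0 := by
  induction k generalizing n with
  | zero => simp [deltaN_apply, show n ≠ l by omega]
  | succ k ih =>
    rcases n with _ | n
    · exact hJ.pow_deltaN_apply_zero hl _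
    rw [hJ.pow_succ_deltaN_apply hl k (by omega), ih _ (by omega), ih _ (by omega),
      ih _ (by omega)]
    ring

lemma pow_deltaN_add_apply (hJ : IsHalfJacobi a b J) (k : ℕ) {n : ℕ} (hn : 1 ≤ n) :
    (J ^ k) (deltaN (n + k)) n = ∏ j ∈ range k, (a (n + j) : ℂ) := by
  induction k generalizing n with
  | zero => simp [deltaN_apply]
  | succ k ih =>
    rw [hJ.pow_succ_deltaN_apply (by omega) k hn, hJ.pow_deltaN_apply_of_lt (by omega) k _
      (by omega), hJ.pow_deltaN_apply_of_lt (by omega) k _ (by omega),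
      show n + (k + 1) = n + 1 + k by ring, ih (by omega), prod_range_succ']
    simp only [add_assoc, add_comm 1, add_zero]
    ring

lemma pow_succ_deltaN_add_apply (hJ : IsHalfJacobi a b J) (k : ℕ) {n : ℕ} (hn : 1 ≤ n) :
    (J ^ (k + 1)) (deltaN (n + k)) n =
      (∑ j ∈ range (k + 1), (b (n + j) : ℂ)) * ∏ j ∈ range k, (a (n + j) : ℂ) := by
  induction k generalizing n with
  | zero =>
    rw [hJ.pow_succ_deltaN_apply (by omega) 0 hn]
    simp [deltaN_apply, show n - 1 ≠ n by omega]
  | succ k ih =>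
    rw [hJ.pow_succ_deltaN_apply (by omega) _ hn, hJ.pow_deltaN_apply_of_lt (by omega) _ _
      (by omega), hJ.pow_deltaN_add_apply _ hn, show n + (k + 1) = n + 1 + k by ring,
      ih (by omega), sum_range_succ' _ (k + 1), prod_range_succ' _ k]
    simp only [add_assoc, add_comm 1, add_zero]
    ring

end IsHalfJacobi

section Transfer

variable (a b : ℤ → ℝ)

lemma tMat_succ (k : ℕ) : tMat a b (k + 1) = lamMat a b (k + 1) * tMat a b k := rfl

lemma tMat_succ_zero_apply (k : ℕ) (j : Fin 2) :
    tMat a b (k + 1) 0 j =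
      C (a (k + 1))⁻¹ * ((X - C (b (k + 1))) * tMat a b k 0 j - tMat a b k 1 j) := by
  rw [tMat_succ, Matrix.mul_apply, Fin.sum_univ_two]
  simp only [lamMat, Matrix.smul_apply, Matrix.of_apply, Matrix.cons_val', Matrix.cons_val_zero,
    Matrix.cons_val_fin_one, Matrix.cons_val_one, smul_eq_mul]
  ring

lemma tMat_succ_one_apply (k : ℕ) (j : Fin 2) :
    tMat a b (k + 1) 1 j = C (a (k + 1)) * tMat a b k 0 j := by
  rw [tMat_succ, Matrix.mul_apply, Fin.sum_univ_two]
  simp only [lamMat, Matrix.smul_apply, Matrix.of_apply, Matrix.cons_val', Matrix.cons_val_zero,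
    Matrix.cons_val_fin_one, Matrix.cons_val_one, smul_eq_mul, mul_zero, zero_mul, add_zero]
  rw [← C_mul, inv_mul_eq_div, sq, mul_self_div_self]

lemma coeff_tMat_succ_zero_apply (k : ℕ) (j : Fin 2) (i : ℕ) :
    (tMat a b (k + 1) 0 j).coeff (i + 1) = (a (k + 1))⁻¹ * ((tMat a b k 0 j).coeff i -
      b (k + 1) * (tMat a b k 0 j).coeff (i + 1) - (tMat a b k 1 j).coeff (i + 1)) := by
  rw [tMat_succ_zero_apply, coeff_C_mul, sub_mul, coeff_sub, coeff_sub, coeff_X_mul,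
    coeff_C_mul]

lemma natDegree_tMat_le (k : ℕ) (i j : Fin 2) : (tMat a b k i j).natDegree ≤ k := by
  induction k generalizing i j with
  | zero => rw [tMat, Matrix.one_apply]; split_ifs <;> simp
  | succ k ih =>
    match i with
    | 0 =>
      rw [tMat_succ_zero_apply]
      refine (natDegree_C_mul_le _ _).trans <| (natDegree_sub_le _ _).trans <|
        max_le (natDegree_mul_le.trans ?_) ((ih 1 j).trans k.le_succ)
      rw [natDegree_X_sub_C, add_comm]
      exact add_le_add_left (ih 0 j) 1
    | 1 =>
      rw [tMat_succ_one_apply]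
      exact (natDegree_C_mul_le _ _).trans ((ih 0 j).trans k.le_succ)

lemma degree_tMat_zero_one_lt (k : ℕ) : (tMat a b k 0 1).degree < k := by
  induction k with
  | zero => simp [tMat]
  | succ k ih =>
    rw [degree_lt_iff_coeff_zero]
    intro i hi
    obtain ⟨i, rfl⟩ : ∃ i', i = i' + 1 := ⟨i - 1, by omega⟩
    have hk : ∀ i', k ≤ i' → (tMat a b k 0 1).coeff i' = 0 :=
      (degree_lt_iff_coeff_zero _ _).1 ih
    rw [coeff_tMat_succ_zero_apply, hk i (by omega), hk (i + 1) (by omega),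
      coeff_eq_zero_of_natDegree_lt ((natDegree_tMat_le a b k 1 1).trans_lt (by omega))]
    ring

lemma coeff_tMat_zero_zero_self (k : ℕ) :
    (tMat a b k 0 0).coeff k = (∏ n ∈ range k, a (n + 1))⁻¹ := by
  induction k with
  | zero => simp [tMat]
  | succ k ih =>
    have htop : ∀ i j, (tMat a b k i j).coeff (k + 1) = 0 := fun i j =>
      coeff_eq_zero_of_natDegree_lt ((natDegree_tMat_le a b k i j).trans_lt k.lt_succ_self)
    rw [coeff_tMat_succ_zero_apply, ih, htop, htop, prod_range_succ, mul_inv]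
    ring

lemma coeff_tMat_succ_zero_zero_self (k : ℕ) : (tMat a b (k + 1) 0 0).coeff k =
    -(∑ n ∈ range (k + 1), b (n + 1)) * (∏ n ∈ range (k + 1), a (n + 1))⁻¹ := by
  induction k with
  | zero =>
    rw [tMat_succ_zero_apply]
    simp [tMat, mul_comm]
  | succ k ih =>
    have htop : (tMat a b (k + 1) 1 0).coeff (k + 1) = 0 := by
      rw [tMat_succ_one_apply, coeff_C_mul, coeff_eq_zero_of_natDegree_lt
        ((natDegree_tMat_le a b k 0 0).trans_lt k.lt_succ_self), mul_zero]
    rw [coeff_tMat_succ_zero_apply, ih, coeff_tMat_zero_zero_self, htop,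
      sum_range_succ _ (k + 1), prod_range_succ _ (k + 1), mul_inv]
    push_cast
    ring

lemma coeff_tMat_succ_one_one_of_le (k : ℕ) {i : ℕ} (hi : k ≤ i) :
    (tMat a b (k + 1) 1 1).coeff i = 0 := by
  rw [tMat_succ_one_apply, coeff_C_mul,
    (degree_lt_iff_coeff_zero _ _).1 (degree_tMat_zero_one_lt a b k) i (by exact_mod_cast hi),
    mul_zero]

lemma coeff_disc_self (k : ℕ) : (disc a b (k + 1)).coeff (k + 1) =
    (∏ n ∈ range (k + 1), a (n + 1))⁻¹ := by
  rw [disc, Matrix.trace_fin_two, coeff_add, coeff_tMat_zero_zero_self,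
    coeff_tMat_succ_one_one_of_le a b k k.le_succ, add_zero]

lemma coeff_disc_succ_self (k : ℕ) : (disc a b (k + 1)).coeff k =
    -(∑ n ∈ range (k + 1), b (n + 1)) * (∏ n ∈ range (k + 1), a (n + 1))⁻¹ := by
  rw [disc, Matrix.trace_fin_two, coeff_add, coeff_tMat_succ_zero_zero_self,
    coeff_tMat_succ_one_one_of_le a b k le_rfl, add_zero]

lemma natDegree_disc_le (k : ℕ) : (disc a b k).natDegree ≤ k := by
  rw [disc, Matrix.trace_fin_two]
  exact (natDegree_add_le _ _).trans (max_le (natDegree_tMat_le a b k 0 0)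
    (natDegree_tMat_le a b k 1 1))

end Transfer

theorem statement16_general (p : ℕ) (hp : 2 ≤ p)
    (a0 b0 : ℤ → ℝ)
    (hpera : Function.Periodic a0 (p : ℤ)) (hperb : Function.Periodic b0 (p : ℤ))
    (a b : ℕ → ℝ)
    (J : HN →L[ℂ] HN) (hJ : IsHalfJacobi a b J)
    (m : ℕ) (hm : 1 ≤ m) :
    entryN (polyOpN (disc a0 b0 p) J) m (m + p)
      = ∏ j ∈ Finset.range p, ((a (m + j) : ℂ) / (a0 ((m : ℤ) + j) : ℂ)) ∧
    entryN (polyOpN (disc a0 b0 p) J) m (m + p - 1)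
      = (∏ j ∈ Finset.range p, (a0 ((m : ℤ) + j) : ℂ))⁻¹ *
          (∏ j ∈ Finset.range (p - 1), (a (m + j) : ℂ)) *
          ∑ j ∈ Finset.range p, ((b (m + j) : ℂ) - (b0 ((m : ℤ) + j) : ℂ)) := by
  obtain ⟨q, rfl⟩ : ∃ q, p = q + 1 := ⟨p - 1, by omega⟩
  have hdeg : (disc a0 b0 (q + 1)).natDegree < q + 1 + 1 :=
    (natDegree_disc_le a0 b0 _).trans_lt (by omega)
  have ha0 : ∏ n ∈ range (q + 1), a0 (n + 1) = ∏ j ∈ range (q + 1), a0 (m + j) := by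
    simp_rw [add_comm _ (1 : ℤ), hpera.prod_range_add_eq 1 m]
  have hb0 : ∑ n ∈ range (q + 1), b0 (n + 1) = ∑ j ∈ range (q + 1), b0 (m + j) := by
    simp_rw [add_comm _ (1 : ℤ), hperb.sum_range_add_eq 1 m]
  have hvanish : ∀ l, ∀ i < l, (J ^ i) (deltaN (m + l)) m = 0 := fun l i hi =>
    hJ.pow_deltaN_apply_of_lt (by omega) i m (by omega)
  constructor
  · rw [entryN_polyOpN hdeg, sum_range_succ, sum_eq_zero fun i hi => by
      rw [hvanish (q + 1) i (mem_range.1 hi), mul_zero], zero_add,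
      hJ.pow_deltaN_add_apply _ hm, coeff_disc_self, ha0, prod_div_distrib]
    push_cast
    ring
  · rw [show m + (q + 1) - 1 = m + q by omega, Nat.add_sub_cancel, entryN_polyOpN hdeg,
      sum_range_succ, sum_range_succ, sum_eq_zero fun i hi => by
      rw [hvanish q i (mem_range.1 hi), mul_zero], zero_add,
      hJ.pow_deltaN_add_apply _ hm, hJ.pow_succ_deltaN_add_apply _ hm, coeff_disc_self,
      coeff_disc_succ_self, ha0, hb0, sum_sub_distrib]
    push_cast
    ring

/-- the extreme off-diagonal entries of `Δ_{J₀}(J)` for a half-line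
Jacobi operator `J`. -/
theorem statement16 (p : ℕ) (hp : 2 ≤ p)
    (a0 b0 : ℤ → ℝ) (ha0pos : ∀ n, 0 < a0 n)
    (hpera : Function.Periodic a0 (p : ℤ)) (hperb : Function.Periodic b0 (p : ℤ))
    (a b : ℕ → ℝ) (hbdd : ∃ C : ℝ, ∀ n : ℕ, |a n| ≤ C ∧ |b n| ≤ C)
    (hpos : ∀ n : ℕ, 1 ≤ n → 0 < a n)
    (J : HN →L[ℂ] HN) (hJ : IsHalfJacobi a b J)
    (m : ℕ) (hm : 1 ≤ m) :
    entryN (polyOpN (disc a0 b0 p) J) m (m + p)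
      = ∏ j ∈ Finset.range p, ((a (m + j) : ℂ) / (a0 ((m : ℤ) + j) : ℂ)) ∧
    entryN (polyOpN (disc a0 b0 p) J) m (m + p - 1)
      = (∏ j ∈ Finset.range p, (a0 ((m : ℤ) + j) : ℂ))⁻¹ *
          (∏ j ∈ Finset.range (p - 1), (a (m + j) : ℂ)) *
          ∑ j ∈ Finset.range p, ((b (m + j) : ℂ) - (b0 ((m : ℤ) + j) : ℂ)) :=
  statement16_general p hp a0 b0 hpera hperb a b J hJ m hm
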